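/- If |F| = 2, the unitary Cayley graph C_{T_n(F_2)} has exactly 2^{n−1} connected components, and each component is isomorphic to the complete bipartite graph K_{m,m} with m = 2^{n(n−1)/2}. -/

import Mathlib

open Matrix

/-- The subring of upper triangular `n × n` matrices over `F`. -/
def upperTri (F : Type) [Field F] (n : ℕ) : Subring (Matrix (Fin n) (Fin n) F) where
  carrier := {M | M.BlockTriangular id}
  zero_mem' := Matrix.blockTriangular_zero
  one_mem' := Matrix.blockTriangular_one
  add_mem' := fun ha hb => ha.add hb
  mul_mem' := fun ha hb => ha.mul hb
  neg_mem' := fun ha => ha.neg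

/-- The unitary Cayley graph of the ring `T_n(F)`. -/
def cayley (F : Type) [Field F] (n : ℕ) : SimpleGraph (upperTri F n) where
  Adj x y := x ≠ y ∧ IsUnit (x - y)
  symm := by
    constructor
    intro x y ⟨hne, hu⟩
    exact ⟨hne.symm, by simpa using hu.neg⟩
  loopless := ⟨fun x h => h.1 rfl⟩


/-! Over `𝔽₂` an upper triangular matrix is a unit iff its diagonal is all ones, so `x ~ y` iff
the diagonals of `x` and `y` differ in every entry, i.e. by the all-ones vector. Hence `a` reaches
`b` iff `diag b - diag a` is a constant vector. The components are therefore indexed by the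
differences `b i i - b 0 0` for `i ≠ 0`, and the component of `a` is the union of the two diagonal
fibers over `diag a` and `diag a + 1`, with every edge between them. A fiber is parametrised by
the `n(n-1)/2` strictly upper entries. -/

namespace SimpleGraph

theorem card_connectedComponent_of_reachable_iff {V β : Type*} {G : SimpleGraph V}
    (f : V → β) (hf : Function.Surjective f) (h : ∀ a b, G.Reachable a b ↔ f a = f b) :
    Nat.card G.ConnectedComponent = Nat.card β := by
  refine Nat.card_congr (Equiv.ofBijective
    (ConnectedComponent.lift f fun v w p _ => (h v w).mp ⟨p⟩) ⟨?_, ?_⟩)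
  · exact ConnectedComponent.ind₂ fun v w hvw => ConnectedComponent.eq.mpr ((h v w).mpr hvw)
  · intro y
    obtain ⟨x, rfl⟩ := hf y
    exact ⟨G.connectedComponentMk x, rfl⟩

def isoCompleteBipartiteGraph {V α β : Type*} (G : SimpleGraph V) (p : V → Prop)
    [DecidablePred p] (e₁ : {v // p v} ≃ α) (e₂ : {v // ¬p v} ≃ β)
    (h : ∀ v w, G.Adj v w ↔ ¬(p v ↔ p w)) : G ≃g completeBipartiteGraph α β where
  toEquiv := (Equiv.sumCompl p).symm.trans (Equiv.sumCongr e₁ e₂)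
  map_rel_iff' {v w} := by
    by_cases hv : p v <;> by_cases hw : p w <;> simp [hv, hw, h]

end SimpleGraph

section FieldOfCardTwo

variable {F : Type} [Field F] [Fintype F]

theorem eq_zero_or_eq_one_of_card_eq_two (hF : Fintype.card F = 2) (x : F) : x = 0 ∨ x = 1 := by
  by_contra! h
  have := Fintype.two_lt_card_iff.mpr ⟨x, 0, 1, h.1, h.2, zero_ne_one⟩
  omega

theorem ne_iff_eq_add_one_of_card_eq_two (hF : Fintype.card F = 2) {x y : F} :
    x ≠ y ↔ y = x + 1 := by
  refine ⟨fun h => ?_, by rintro rfl; simp⟩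
  rw [← sub_eq_iff_eq_add']
  exact (eq_zero_or_eq_one_of_card_eq_two hF _).resolve_left (sub_ne_zero.mpr h.symm)

theorem ne_iff_not_iff_eq_zero_of_card_eq_two (hF : Fintype.card F = 2) {x y : F} :
    x ≠ y ↔ ¬(x = 0 ↔ y = 0) := by
  rcases eq_zero_or_eq_one_of_card_eq_two hF x with rfl | rfl <;>
    rcases eq_zero_or_eq_one_of_card_eq_two hF y with rfl | rfl <;> simp

end FieldOfCardTwo

namespace upperTri

variable {F : Type} [Field F] {n : ℕ}

theorem isUnit_iff {x : upperTri F n} : IsUnit x ↔ ∀ i, x.1 i i ≠ 0 := by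
  have hdet : IsUnit x.1 ↔ ∀ i, x.1 i i ≠ 0 := by
    rw [isUnit_iff_isUnit_det, det_of_isUpperTriangular x.2, isUnit_iff_ne_zero,
      Finset.prod_ne_zero_iff]
    simp
  rw [← hdet]
  refine ⟨fun h => h.map (upperTri F n).subtype, fun h => ?_⟩
  have hdet := (isUnit_iff_isUnit_det _).mp h
  have := invertibleOfIsUnitDet x.1 hdet
  have hinv : x.1⁻¹ ∈ upperTri F n := blockTriangular_inv_of_blockTriangular x.2
  exact ⟨⟨x, ⟨_, hinv⟩, Subtype.ext (mul_nonsing_inv _ hdet),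
    Subtype.ext (nonsing_inv_mul _ hdet)⟩, rfl⟩

def diagFiberEquiv (d : Fin n → F) :
    {x : upperTri F n // ∀ i, x.1 i i = d i} ≃ ({p : Fin n × Fin n // p.1 < p.2} → F) where
  toFun x p := x.1.1 p.1.1 p.1.2
  invFun f :=
    ⟨⟨fun i j => if h : i < j then f ⟨(i, j), h⟩ else if i = j then d i else 0,
      fun i j (hji : j < i) => by simp [asymm hji, hji.ne']⟩, fun i => by simp⟩
  left_inv x := by
    refine Subtype.ext (Subtype.ext (funext₂ fun i j => ?_))
    rcases lt_trichotomy i j with h | rfl | h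
    · simp [h]
    · simp [x.2 i]
    · simp [asymm h, h.ne', x.1.2 h]
  right_inv f := funext fun p => dif_pos p.2

theorem card_diagFiber [Fintype F] (d : Fin n → F) :
    Nat.card {x : upperTri F n // ∀ i, x.1 i i = d i} = Fintype.card F ^ (n * (n - 1) / 2) := by
  rw [Nat.card_congr (diagFiberEquiv d), Nat.card_fun, Nat.card_eq_fintype_card,
    Nat.card_eq_fintype_card, Fintype.card_subtype, Fintype.card_product_filter_lt,
    Fintype.card_fin, Nat.choose_two_right]

end upperTri

section Cayley

variable {F : Type} [Field F] {n : ℕ}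

theorem cayley_adj_iff [NeZero n] {x y : upperTri F n} :
    (cayley F n).Adj x y ↔ ∀ i, x.1 i i ≠ y.1 i i := by
  have hunit : IsUnit (x - y) ↔ ∀ i, x.1 i i ≠ y.1 i i := by
    simp [upperTri.isUnit_iff, sub_ne_zero]
  refine ⟨fun h => hunit.mp h.2, fun h => ⟨?_, hunit.mpr h⟩⟩
  rintro rfl
  exact h 0 rfl

variable [Fintype F]

theorem cayley_reachable_iff (hF : Fintype.card F = 2) [NeZero n] {a b : upperTri F n} :
    (cayley F n).Reachable a b ↔ ∃ c : F, ∀ i, b.1 i i = a.1 i i + c := by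
  constructor
  · rintro ⟨w⟩
    induction w with
    | nil => exact ⟨0, fun i => (add_zero _).symm⟩
    | cons hadj _ ih =>
      obtain ⟨c, hc⟩ := ih
      refine ⟨1 + c, fun i => ?_⟩
      rw [hc i, (ne_iff_eq_add_one_of_card_eq_two hF).mp (cayley_adj_iff.mp hadj i), add_assoc]
  · rintro ⟨c, hc⟩
    have hsucc : (cayley F n).Adj a (a + 1) := cayley_adj_iff.mpr fun i => by simp
    rcases eq_zero_or_eq_one_of_card_eq_two hF c with rfl | rfl
    · refine hsucc.reachable.trans (cayley_adj_iff.mpr fun i => ?_).reachable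
      simp [hc i]
    · exact (cayley_adj_iff.mpr fun i => by simp [hc i]).reachable

theorem card_connectedComponent_cayley (hF : Fintype.card F = 2) [NeZero n] :
    Nat.card (cayley F n).ConnectedComponent = 2 ^ (n - 1) := by
  obtain ⟨k, rfl⟩ := Nat.exists_eq_succ_of_ne_zero (NeZero.ne n)
  let diagDiff : upperTri F (k + 1) → Fin k → F := fun x j => x.1 j.succ j.succ - x.1 0 0
  have hsurj : Function.Surjective diagDiff := fun g =>
    ⟨⟨diagonal (Fin.cons 0 g), blockTriangular_diagonal _⟩, funext fun j => by simp [diagDiff]⟩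
  have hreach : ∀ a b, (cayley F (k + 1)).Reachable a b ↔ diagDiff a = diagDiff b := by
    intro a b
    rw [cayley_reachable_iff hF, funext_iff]
    constructor
    · rintro ⟨c, hc⟩ j
      simp only [diagDiff, hc]
      ring
    · intro h
      refine ⟨b.1 0 0 - a.1 0 0, Fin.cases (by ring) fun j => ?_⟩
      linear_combination (h j).symm
  rw [SimpleGraph.card_connectedComponent_of_reachable_iff diagDiff hsurj hreach,
    Nat.card_fun, Nat.card_eq_fintype_card, hF, Nat.card_fin, Nat.succ_sub_one]

theorem cayley_adj_iff_of_reachable (hF : Fintype.card F = 2) [NeZero n] {a b c : upperTri F n}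
    (hb : (cayley F n).Reachable a b) (hc : (cayley F n).Reachable a c) :
    (cayley F n).Adj b c ↔ ¬((∀ i, b.1 i i = a.1 i i) ↔ ∀ i, c.1 i i = a.1 i i) := by
  obtain ⟨s, hs⟩ := (cayley_reachable_iff hF).mp hb
  obtain ⟨t, ht⟩ := (cayley_reachable_iff hF).mp hc
  simp only [cayley_adj_iff, hs, ht, ne_eq, add_right_inj, add_eq_left, forall_const]
  exact ne_iff_not_iff_eq_zero_of_card_eq_two hF

theorem cayley_reachable_and_not_diag_eq_iff (hF : Fintype.card F = 2) [NeZero n]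
    {a b : upperTri F n} :
    ((cayley F n).Reachable a b ∧ ¬∀ i, b.1 i i = a.1 i i) ↔ ∀ i, b.1 i i = a.1 i i + 1 := by
  rw [cayley_reachable_iff hF]
  constructor
  · rintro ⟨⟨c, hc⟩, hne⟩
    obtain rfl : c = 1 := (eq_zero_or_eq_one_of_card_eq_two hF c).resolve_left
      (by rintro rfl; simp [hc] at hne)
    exact hc
  · intro h
    exact ⟨⟨1, h⟩, fun h' => by simpa [h] using h' 0⟩

noncomputable def diagFiberEquivFin (hF : Fintype.card F = 2) (d : Fin n → F) :
    {x : upperTri F n // ∀ i, x.1 i i = d i} ≃ Fin (2 ^ (n * (n - 1) / 2)) :=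
  (Finite.equivFin _).trans (finCongr (by rw [upperTri.card_diagFiber, hF]))

noncomputable def cayleyComponentIso (hF : Fintype.card F = 2) [NeZero n] (a : upperTri F n) :
    (cayley F n).induce {b | (cayley F n).Reachable a b} ≃g
      completeBipartiteGraph (Fin (2 ^ (n * (n - 1) / 2))) (Fin (2 ^ (n * (n - 1) / 2))) := by
  classical
  exact SimpleGraph.isoCompleteBipartiteGraph _ (fun b => ∀ i, b.1.1 i i = a.1 i i)
    ((Equiv.subtypeSubtypeEquivSubtype fun hb =>
        (cayley_reachable_iff hF).mpr ⟨0, by simpa using hb⟩).trans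
      (diagFiberEquivFin hF _))
    ((Equiv.subtypeSubtypeEquivSubtypeInter _ _).trans
      ((Equiv.subtypeEquivRight fun _ => cayley_reachable_and_not_diag_eq_iff hF).trans
        (diagFiberEquivFin hF _)))
    fun b c => cayley_adj_iff_of_reachable hF b.2 c.2

end Cayley

/-- If `|F| = 2`, the graph `C_{T_n(F)}` has exactly `2^(n-1)` connected components,
and each component (as an induced subgraph) is isomorphic to the complete bipartite
graph `K_{m,m}` with `m = 2^(n*(n-1)/2)`. -/
theorem stmt6 (F : Type) [Field F] [Fintype F] (hF : Fintype.card F = 2)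
    (n : ℕ) (hn : 0 < n) :
    Nat.card (cayley F n).ConnectedComponent = 2 ^ (n - 1) ∧
    ∀ a : upperTri F n,
      Nonempty
        (((cayley F n).induce {b | (cayley F n).Reachable a b}) ≃g
          completeBipartiteGraph (Fin (2 ^ (n * (n - 1) / 2)))
            (Fin (2 ^ (n * (n - 1) / 2)))) := by
  have : NeZero n := ⟨hn.ne'⟩
  exact ⟨card_connectedComponent_cayley hF, fun a => ⟨cayleyComponentIso hF a⟩⟩
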